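/- Let Π_D be either the BBDS projection Π^BBDS_D or the DLL projection Π^DLL_D. Let S and S' be a pair of edge-neighboring or node-neighboring insertion-only graph streams of length T, where S' is the larger stream (containing at most one additional node as compared to S). For every edge e = {u,v} that arrives in S at or before time t ∈ [T], if both u and v have degree at most D in flat(S'_[t]), then e is included in both projected streams Π_D(S) and Π_D(S'). -/

import Mathlib

/-!
Under either rule, the counter of a node grows only when an edge at that node is processed,
and edges are processed in order of arrival. So when `e = {u, v}` is processed, the counter of
`u` is at most the number of edges at `u` processed before `e`: distinct edges of `flat(S_[t])`
other than `e`, hence fewer than `D`. This applies to `S` as well as `S'`, because every edge of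
`S` is an edge of `S'`.
-/

open Finset

/-- A finite graph: a finite vertex set together with a finite set of undirected edges. -/
structure FinGraph where
  verts : Finset ℕ
  edges : Finset (Sym2 ℕ)

namespace FinGraph

/-- A finite graph is valid if every edge is a non-loop both of whose endpoints are vertices. -/
def Valid (G : FinGraph) : Prop :=
  ∀ e ∈ G.edges, ¬ e.IsDiag ∧ ∀ v ∈ e, v ∈ G.verts

/-- The degree of a vertex: the number of edges containing it. -/
def degree (G : FinGraph) (v : ℕ) : ℕ :=
  (G.edges.filter (fun e => v ∈ e)).card

/-- Remove a node and all of its adjacent edges. -/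
def removeNode (G : FinGraph) (v : ℕ) : FinGraph :=
  ⟨G.verts.erase v, G.edges.filter (fun e => v ∉ e)⟩

/-- Remove a single edge. -/
def removeEdge (G : FinGraph) (e : Sym2 ℕ) : FinGraph :=
  ⟨G.verts, G.edges.erase e⟩

/-- `G` is `(D, ℓ)`-bounded: it has at most `ℓ` nodes of degree greater than `D`. -/
def DLBounded (G : FinGraph) (D ℓ : ℕ) : Prop :=
  (G.verts.filter (fun v => D < G.degree v)).card ≤ ℓ

end FinGraph

/-- One graph is obtained from the other by removing one node and all of its adjacent edges. -/
def nodeNeighborGraph (G G' : FinGraph) : Prop :=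
  (∃ v ∈ G.verts, G' = G.removeNode v) ∨ (∃ v ∈ G'.verts, G = G'.removeNode v)

/-- `G'` is obtained from `G` by removing a single edge, an isolated node,
or a degree-one node together with its adjacent edge. -/
def edgeRemovalGraph (G G' : FinGraph) : Prop :=
  (∃ e ∈ G.edges, G' = G.removeEdge e) ∨
  (∃ v ∈ G.verts, G.degree v = 0 ∧ G' = FinGraph.mk (G.verts.erase v) G.edges) ∨
  (∃ v ∈ G.verts, G.degree v = 1 ∧ G' = G.removeNode v)

/-- Edge-neighboring graphs. -/
def edgeNeighborGraph (G G' : FinGraph) : Prop :=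
  edgeRemovalGraph G G' ∨ edgeRemovalGraph G' G

/-- The length of a shortest chain of valid graphs from `A` to `B` in which
consecutive graphs are related by `R`. -/
noncomputable def graphChainDist (R : FinGraph → FinGraph → Prop) (A B : FinGraph) : ℕ :=
  sInf {n | ∃ f : ℕ → FinGraph, f 0 = A ∧ f n = B ∧ (∀ i ≤ n, (f i).Valid) ∧
    ∀ i < n, R (f i) (f (i + 1))}

/-- Node distance between finite graphs. -/
noncomputable def graphNodeDist : FinGraph → FinGraph → ℕ := graphChainDist nodeNeighborGraph

/-- Edge distance between finite graphs. -/
noncomputable def graphEdgeDist : FinGraph → FinGraph → ℕ := graphChainDist edgeNeighborGraph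

/-- An insertion-only graph stream: the nodes and edges arriving at each time step. -/
structure GraphStream where
  nodes : ℕ → Finset ℕ
  edges : ℕ → Finset (Sym2 ℕ)

namespace GraphStream

/-- Validity of a graph stream of length `T`: arrivals happen only at times `1, …, T`,
no node or edge arrives twice, and every edge is a non-loop whose endpoints
arrive at or before the edge does. -/
def Valid (T : ℕ) (S : GraphStream) : Prop :=
  (∀ t, ((S.nodes t).Nonempty ∨ (S.edges t).Nonempty) → 1 ≤ t ∧ t ≤ T) ∧
  (∀ s t, s ≠ t → Disjoint (S.nodes s) (S.nodes t)) ∧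
  (∀ s t, s ≠ t → Disjoint (S.edges s) (S.edges t)) ∧
  (∀ t, ∀ e ∈ S.edges t, ¬ e.IsDiag ∧ ∀ v ∈ e, ∃ s ≤ t, v ∈ S.nodes s)

/-- The flattened graph of the stream through time `t`. -/
def flat (S : GraphStream) (t : ℕ) : FinGraph :=
  ⟨(Finset.range (t + 1)).biUnion S.nodes, (Finset.range (t + 1)).biUnion S.edges⟩

/-- Remove a node and all of its adjacent edges from a stream. -/
def removeNode (S : GraphStream) (v : ℕ) : GraphStream :=
  ⟨fun t => (S.nodes t).erase v, fun t => (S.edges t).filter (fun e => v ∉ e)⟩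

/-- Remove a single edge from a stream. -/
def removeEdge (S : GraphStream) (e : Sym2 ℕ) : GraphStream :=
  ⟨S.nodes, fun t => (S.edges t).erase e⟩

/-- Truncation of a stream: keep only arrivals at times `≤ t`. -/
def trunc (S : GraphStream) (t : ℕ) : GraphStream :=
  ⟨fun s => if s ≤ t then S.nodes s else ∅, fun s => if s ≤ t then S.edges s else ∅⟩

/-- `v` arrives at some point in the stream. -/
def hasNode (S : GraphStream) (v : ℕ) : Prop :=
  ∃ t, v ∈ S.nodes t

/-- The stream is `(D, ℓ)`-bounded through time `t`. -/
def DLBoundedThrough (S : GraphStream) (D ℓ t : ℕ) : Prop :=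
  (S.flat t).DLBounded D ℓ

end GraphStream

/-- `S'` is obtained from `S` by removing one node and all of its adjacent edges
(which may arrive at many time steps). -/
def nodeRemovalStream (S S' : GraphStream) : Prop :=
  ∃ v, S.hasNode v ∧ S' = S.removeNode v

/-- Node-neighboring streams. -/
def nodeNeighborStream (S S' : GraphStream) : Prop :=
  nodeRemovalStream S S' ∨ nodeRemovalStream S' S

/-- `S'` is obtained from the length-`T` stream `S` by removing a single edge,
an isolated node, or a degree-one node together with its adjacent edge. -/
def edgeRemovalStream (T : ℕ) (S S' : GraphStream) : Prop :=
  (∃ t, ∃ e ∈ S.edges t, S' = S.removeEdge e) ∨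
  (∃ v, S.hasNode v ∧ (S.flat T).degree v ≤ 1 ∧ S' = S.removeNode v)

/-- Edge-neighboring streams (of length `T`). -/
def edgeNeighborStream (T : ℕ) (S S' : GraphStream) : Prop :=
  edgeRemovalStream T S S' ∨ edgeRemovalStream T S' S

/-- Length of a shortest chain of valid streams of length `T` in which consecutive
streams are related by `R`. -/
noncomputable def streamChainDist (T : ℕ) (R : GraphStream → GraphStream → Prop)
    (A B : GraphStream) : ℕ :=
  sInf {n | ∃ f : ℕ → GraphStream, f 0 = A ∧ f n = B ∧ (∀ i ≤ n, (f i).Valid T) ∧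
    ∀ i < n, R (f i) (f (i + 1))}

/-- Node distance between streams of length `T`. -/
noncomputable def streamNodeDist (T : ℕ) : GraphStream → GraphStream → ℕ :=
  streamChainDist T nodeNeighborStream

/-- Edge distance between streams of length `T`. -/
noncomputable def streamEdgeDist (T : ℕ) : GraphStream → GraphStream → ℕ :=
  streamChainDist T (edgeNeighborStream T)

/-- A fixed injective key on undirected edges, providing the consistent total order in
which edges arriving at the same time step are processed. -/
def edgeKey : Sym2 ℕ → ℕ :=
  Sym2.lift ⟨fun a b => Nat.pair (min a b) (max a b), fun a b => by
    dsimp only; rw [inf_comm, sup_comm]⟩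

/-- The two endpoints of an edge, as an ordered pair. -/
def endpointsOf (e : Sym2 ℕ) : ℕ × ℕ := (edgeKey e).unpair

/-- The edges of a finite edge set, listed in increasing `edgeKey` order. -/
def sortEdges (E : Finset (Sym2 ℕ)) : List (Sym2 ℕ) :=
  ((E.image edgeKey).sort (· ≤ ·)).map fun k => s(k.unpair.1, k.unpair.2)

/-- All edges of a stream of length `T`, tagged with their arrival times, in processing
order: lexicographically by (arrival time, consistent edge order). -/
def GraphStream.procList (S : GraphStream) (T : ℕ) : List (ℕ × Sym2 ℕ) :=
  (List.range (T + 1)).flatMap fun t => (sortEdges (S.edges t)).map fun e => (t, e)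

/-- One step of the greedy projection with degree bound `D`.  The state consists of the
degree counters together with the edges kept so far (indexed by arrival time).
If `bbds = true` the counters of the endpoints are incremented for every processed edge
(the BBDS rule); if `bbds = false` they are incremented only when the edge is kept
(the DLL rule). -/
def projStep (D : ℕ) (bbds : Bool) (st : (ℕ → ℕ) × (ℕ → Finset (Sym2 ℕ)))
    (p : ℕ × Sym2 ℕ) : (ℕ → ℕ) × (ℕ → Finset (Sym2 ℕ)) :=
  let d := st.1
  let u := (endpointsOf p.2).1
  let v := (endpointsOf p.2).2
  let keep : Bool := decide (d u < D ∧ d v < D)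
  ((if bbds || keep then fun w => if w = u ∨ w = v then d w + 1 else d w else d),
   (if keep then fun s => if s = p.1 then insert p.2 (st.2 s) else st.2 s else st.2))

/-- The time-aware projection with degree bound `D` on streams of length `T`:
the BBDS projection if `bbds = true` and the DLL projection if `bbds = false`.
All arriving nodes are kept; an arriving edge is kept (at its arrival time) iff both of
its endpoints have counter value `< D` when the edge is processed. -/
def project (bbds : Bool) (D T : ℕ) (S : GraphStream) : GraphStream :=
  ⟨S.nodes,
   ((S.procList T).foldl (projStep D bbds)
      ((fun _ => 0 : ℕ → ℕ), (fun _ => ∅ : ℕ → Finset (Sym2 ℕ)))).2⟩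

/-- The BBDS projection `Π^BBDS_D` on streams of length `T`. -/
def projBBDS (D T : ℕ) : GraphStream → GraphStream := project true D T

/-- The DLL projection `Π^DLL_D` on streams of length `T`. -/
def projDLL (D T : ℕ) : GraphStream → GraphStream := project false D T

lemma mk_endpointsOf (e : Sym2 ℕ) : s((endpointsOf e).1, (endpointsOf e).2) = e := by
  induction e using Sym2.ind with
  | _ a b =>
    simp only [endpointsOf, edgeKey, Sym2.lift_mk, Nat.unpair_pair]
    rcases le_total a b with h | h
    · rw [min_eq_left h, max_eq_right h]
    · rw [min_eq_right h, max_eq_left h, Sym2.eq_swap]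

lemma fst_endpointsOf_mem (e : Sym2 ℕ) : (endpointsOf e).1 ∈ e := by
  simpa only [mk_endpointsOf] using Sym2.mem_mk_left (endpointsOf e).1 (endpointsOf e).2

lemma snd_endpointsOf_mem (e : Sym2 ℕ) : (endpointsOf e).2 ∈ e := by
  simpa only [mk_endpointsOf] using Sym2.mem_mk_right (endpointsOf e).1 (endpointsOf e).2

lemma mk_unpair_edgeKey (e : Sym2 ℕ) : s((edgeKey e).unpair.1, (edgeKey e).unpair.2) = e :=
  mk_endpointsOf e

lemma mem_sortEdges {E : Finset (Sym2 ℕ)} {e : Sym2 ℕ} : e ∈ sortEdges E ↔ e ∈ E := by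
  simp only [sortEdges, List.mem_map, Finset.mem_sort, Finset.mem_image]
  constructor
  · rintro ⟨k, ⟨e', he', rfl⟩, rfl⟩
    rwa [mk_unpair_edgeKey]
  · exact fun he => ⟨edgeKey e, ⟨e, he, rfl⟩, mk_unpair_edgeKey e⟩

lemma sortEdges_nodup (E : Finset (Sym2 ℕ)) : (sortEdges E).Nodup := by
  refine List.Nodup.map_on ?_ (Finset.sort_nodup _ _)
  intro k₁ hk₁ k₂ hk₂ heq
  simp only [Finset.mem_sort, Finset.mem_image] at hk₁ hk₂
  obtain ⟨e₁, -, rfl⟩ := hk₁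
  obtain ⟨e₂, -, rfl⟩ := hk₂
  rw [mk_unpair_edgeKey, mk_unpair_edgeKey] at heq
  rw [heq]

namespace GraphStream

variable {S : GraphStream} {T : ℕ}

lemma mem_procList {p : ℕ × Sym2 ℕ} : p ∈ S.procList T ↔ p.1 ≤ T ∧ p.2 ∈ S.edges p.1 := by
  simp only [procList, List.mem_flatMap, List.mem_range, List.mem_map, mem_sortEdges]
  constructor
  · rintro ⟨t, ht, e, he, rfl⟩
    exact ⟨Nat.lt_succ_iff.mp ht, he⟩
  · exact fun ⟨hp, he⟩ => ⟨p.1, Nat.lt_succ_of_le hp, p.2, he, rfl⟩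

lemma procList_pairwise_time_le : (S.procList T).Pairwise (fun p q => p.1 ≤ q.1) := by
  refine List.pairwise_flatMap.mpr ⟨fun t _ => ?_, List.pairwise_lt_range.imp ?_⟩
  · exact List.pairwise_map.mpr (List.pairwise_of_forall fun _ _ => le_rfl)
  · intro a b hab p hp q hq
    simp only [List.mem_map] at hp hq
    obtain ⟨-, -, rfl⟩ := hp
    obtain ⟨-, -, rfl⟩ := hq
    exact hab.le

lemma procList_map_snd_nodup (hdisj : ∀ s t, s ≠ t → Disjoint (S.edges s) (S.edges t)) :
    ((S.procList T).map Prod.snd).Nodup := by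
  simp only [procList, List.map_flatMap, List.map_map, Function.comp_def, List.map_id']
  refine List.nodup_flatMap.mpr ⟨fun t _ => sortEdges_nodup _, List.nodup_range.imp ?_⟩
  intro a b hab x hxa hxb
  rw [mem_sortEdges] at hxa hxb
  exact Finset.disjoint_left.mp (hdisj a b hab) hxa hxb

lemma mem_flat_edges {t : ℕ} {e : Sym2 ℕ} : e ∈ (S.flat t).edges ↔ ∃ s ≤ t, e ∈ S.edges s := by
  simp only [flat, Finset.mem_biUnion, Finset.mem_range, Nat.lt_succ_iff]

end GraphStream

lemma FinGraph.countP_mem_lt_degree (G : FinGraph) {l : List (Sym2 ℕ)} {e : Sym2 ℕ} {w : ℕ}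
    (hl : l.Nodup) (hlG : ∀ x ∈ l, x ∈ G.edges) (he : e ∈ G.edges) (hel : e ∉ l) (hw : w ∈ e) :
    l.countP (fun x => w ∈ x) < G.degree w := by
  rw [List.countP_eq_length_filter, ← List.toFinset_card_of_nodup (hl.filter _)]
  refine Finset.card_lt_card ⟨fun x hx => ?_, fun hsub => ?_⟩
  · simp only [List.mem_toFinset, List.mem_filter, decide_eq_true_eq] at hx
    exact Finset.mem_filter.mpr ⟨hlG x hx.1, hx.2⟩
  · have := hsub (Finset.mem_filter.mpr ⟨he, hw⟩)
    simp only [List.mem_toFinset, List.mem_filter] at this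
    exact hel this.1

section Projection

local notation "ProjState" => (ℕ → ℕ) × (ℕ → Finset (Sym2 ℕ))

variable {D : ℕ} {bbds : Bool}

lemma projStep_counter_le (st : ProjState) (p : ℕ × Sym2 ℕ) (w : ℕ) :
    (projStep D bbds st p).1 w ≤ st.1 w + if w ∈ p.2 then 1 else 0 := by
  simp only [projStep]
  split_ifs <;> grind [fst_endpointsOf_mem, snd_endpointsOf_mem]

lemma foldl_projStep_counter_le (L : List (ℕ × Sym2 ℕ)) (init : ProjState) (w : ℕ) :
    (L.foldl (projStep D bbds) init).1 w ≤ init.1 w + L.countP (fun p => w ∈ p.2) := by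
  induction L generalizing init with
  | nil => simp
  | cons p L ih =>
    have := projStep_counter_le (D := D) (bbds := bbds) init p w
    rw [List.foldl_cons, List.countP_cons]
    grind

lemma mem_projStep_of_mem {st : ProjState} {r : ℕ} {e : Sym2 ℕ}
    (p : ℕ × Sym2 ℕ) (he : e ∈ st.2 r) : e ∈ (projStep D bbds st p).2 r := by
  simp only [projStep]
  split_ifs
  · beta_reduce
    split_ifs <;> simp [he]
  · exact he

lemma mem_foldl_projStep_of_mem {init : ProjState} {r : ℕ} {e : Sym2 ℕ}
    (L : List (ℕ × Sym2 ℕ)) (he : e ∈ init.2 r) : e ∈ (L.foldl (projStep D bbds) init).2 r := by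
  induction L generalizing init with
  | nil => exact he
  | cons p L ih => exact ih (mem_projStep_of_mem p he)

lemma mem_projStep_of_counter_lt {st : ProjState} {p : ℕ × Sym2 ℕ}
    (hlt : ∀ w ∈ p.2, st.1 w < D) : p.2 ∈ (projStep D bbds st p).2 p.1 := by
  simp [projStep, hlt _ (fst_endpointsOf_mem p.2), hlt _ (snd_endpointsOf_mem p.2)]

end Projection

lemma mem_project_edges_of_degree_le (bbds : Bool) {D T : ℕ} {S : GraphStream}
    (hdisj : ∀ s t, s ≠ t → Disjoint (S.edges s) (S.edges t))
    {s t : ℕ} (hst : s ≤ t) (htT : t ≤ T) {e : Sym2 ℕ} (he : e ∈ S.edges s)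
    (hdeg : ∀ w ∈ e, (S.flat t).degree w ≤ D) :
    e ∈ (project bbds D T S).edges s := by
  obtain ⟨L₁, L₂, hL⟩ :=
    List.append_of_mem ((S.mem_procList (p := (s, e))).mpr ⟨hst.trans htT, he⟩)
  have hnodup := S.procList_map_snd_nodup (T := T) hdisj
  rw [hL, List.map_append, List.map_cons, List.nodup_append] at hnodup
  have hsorted := S.procList_pairwise_time_le (T := T)
  rw [hL, List.pairwise_append] at hsorted
  have hL₁ : ∀ x ∈ L₁.map Prod.snd, x ∈ (S.flat t).edges := by
    simp only [List.mem_map]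
    rintro _ ⟨p, hp, rfl⟩
    have hpS := S.mem_procList.mp (hL ▸ List.mem_append_left _ hp)
    exact S.mem_flat_edges.mpr ⟨p.1, (hsorted.2.2 p hp _ List.mem_cons_self).trans hst, hpS.2⟩
  have hcounter : ∀ w ∈ e, (L₁.foldl (projStep D bbds) (fun _ => 0, fun _ => ∅)).1 w < D := by
    intro w hw
    calc _ ≤ 0 + L₁.countP (fun p => w ∈ p.2) := foldl_projStep_counter_le _ _ w
      _ = (L₁.map Prod.snd).countP (fun x => w ∈ x) := by
          rw [zero_add, List.countP_map]; rfl
      _ < (S.flat t).degree w :=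
          (S.flat t).countP_mem_lt_degree hnodup.1 hL₁ (S.mem_flat_edges.mpr ⟨s, hst, he⟩)
            (fun h => hnodup.2.2 _ h _ List.mem_cons_self rfl) hw
      _ ≤ D := hdeg w hw
  change e ∈ ((S.procList T).foldl (projStep D bbds) (fun _ => 0, fun _ => ∅)).2 s
  rw [hL, List.foldl_append, List.foldl_cons]
  exact mem_foldl_projStep_of_mem L₂ (mem_projStep_of_counter_lt (p := (s, e)) hcounter)

lemma edges_subset_of_removal {T : ℕ} {S S' : GraphStream}
    (h : edgeRemovalStream T S' S ∨ nodeRemovalStream S' S) (r : ℕ) :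
    S.edges r ⊆ S'.edges r := by
  rcases h with (⟨-, e₀, -, rfl⟩ | ⟨v, -, -, rfl⟩) | ⟨v, -, rfl⟩
  · exact Finset.erase_subset _ _
  · exact Finset.filter_subset _ _
  · exact Finset.filter_subset _ _

lemma GraphStream.flat_degree_mono {S S' : GraphStream} (h : ∀ r, S.edges r ⊆ S'.edges r)
    (t w : ℕ) : (S.flat t).degree w ≤ (S'.flat t).degree w :=
  Finset.card_le_card <| Finset.filter_subset_filter _ <| Finset.biUnion_mono fun r _ => h r

theorem edges_between_low_degree_nodes_remain_general (bbds : Bool) (D T : ℕ)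
    (S S' : GraphStream) (hS : S.Valid T) (hS' : S'.Valid T)
    (hnb : edgeRemovalStream T S' S ∨ nodeRemovalStream S' S)
    (t : ℕ) (htT : t ≤ T)
    (e : Sym2 ℕ) (s : ℕ) (hs : s ≤ t) (he : e ∈ S.edges s)
    (hdeg : ∀ w ∈ e, (S'.flat t).degree w ≤ D) :
    (∃ r, e ∈ (project bbds D T S).edges r) ∧ (∃ r, e ∈ (project bbds D T S').edges r) := by
  have hsub := edges_subset_of_removal hnb
  have hdegS : ∀ w ∈ e, (S.flat t).degree w ≤ D := fun w hw =>
    (GraphStream.flat_degree_mono hsub t w).trans (hdeg w hw)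
  exact ⟨⟨s, mem_project_edges_of_degree_le bbds hS.2.2.1 hs htT he hdegS⟩,
    ⟨s, mem_project_edges_of_degree_le bbds hS'.2.2.1 hs htT (hsub s he) hdeg⟩⟩

/-- edges between low-degree nodes remain in both projections.
Let `Π_D` be either the BBDS or the DLL projection.  Let `S, S'` be edge- or
node-neighboring insertion-only graph streams of length `T` with `S'` the larger stream.
For every edge `e = {u, v}` arriving in `S` at or before time `t ∈ [T]`, if both `u` and
`v` have degree at most `D` in `flat(S'_[t])`, then `e` is included in both projected
streams `Π_D(S)` and `Π_D(S')`. -/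
theorem edges_between_low_degree_nodes_remain (bbds : Bool) (D T : ℕ)
    (S S' : GraphStream) (hS : S.Valid T) (hS' : S'.Valid T)
    (hnb : edgeRemovalStream T S' S ∨ nodeRemovalStream S' S)
    (t : ℕ) (ht1 : 1 ≤ t) (htT : t ≤ T)
    (e : Sym2 ℕ) (s : ℕ) (hs : s ≤ t) (he : e ∈ S.edges s)
    (hdeg : ∀ w ∈ e, (S'.flat t).degree w ≤ D) :
    (∃ r, e ∈ (project bbds D T S).edges r) ∧ (∃ r, e ∈ (project bbds D T S').edges r) :=
  edges_between_low_degree_nodes_remain_general bbds D T S S' hS hS' hnb t htT e s hs he hdeg
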